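/- arXiv:2304.04182 — 7 statements merged into one kernel-verified Lean document; each statement's English description precedes it below -/
import Mathlib

section
/- Let n ≥ 3 and let q(x,y) = x² + y² − n·x·y. If integers x, y satisfy (2/n)·x ≤ y ≤ x, y ≥ 2(n−1), then q(x−1, y−(n−1)) < 0. -/
theorem stmt_0 (n x y : ℤ) (hn : 3 ≤ n)
    (h1 : 2 * x ≤ n * y) (h2 : y ≤ x) (h3 : 2 * (n - 1) ≤ y) :
    (x - 1) ^ 2 + (y - (n - 1)) ^ 2 - n * (x - 1) * (y - (n - 1)) < 0 := by
  nlinarith [sq_nonneg (x - y), sq_nonneg (n*y - 2*x), sq_nonneg n, mul_le_mul_of_nonneg_left h2 (by linarith : (0:ℤ) ≤ n), mul_le_mul_of_nonneg_left h3 (by linarith : (0:ℤ) ≤ n)]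
end

section
/- Let n ≥ 3 and let x, y be integers with y ≤ x ≤ n−1 and 1 ≤ y' < y and x−1 ≥ y−y'. Then q(x−1, y−y') < 0, where q(x,y) = x² + y² − n·x·y. -/
theorem stmt_4 (n x y y' : ℤ) (hn : 3 ≤ n)
    (hyx : y ≤ x) (hxn : x ≤ n - 1) (hy'1 : 1 ≤ y') (hy'y : y' < y)
    (hxy : y - y' ≤ x - 1) :
    (x - 1) ^ 2 + (y - y') ^ 2 - n * (x - 1) * (y - y') < 0 := by
  set a := x - 1 with ha
  set b := y - y' with hb
  have hb1 : 1 ≤ b := by omega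
  have hba : b ≤ a := hxy
  have han : a ≤ n - 2 := by omega
  nlinarith [mul_le_mul_of_nonneg_right han (by omega : (0:ℤ) ≤ a),
    mul_nonneg (by omega : (0:ℤ) ≤ a - b) (by omega : (0:ℤ) ≤ b - 1),
    mul_nonneg (mul_nonneg (by omega : (0:ℤ) ≤ n - 3) (by omega : (0:ℤ) ≤ a)) (by omega : (0:ℤ) ≤ b - 1),
    mul_nonneg (by omega : (0:ℤ) ≤ n) (mul_nonneg (by omega : (0:ℤ) ≤ a) (by omega : (0:ℤ) ≤ b - 1))]
end

section
/- Let n ≥ 4, and let x, y be integers with 2n ≤ x < n(n−1), 4 ≤ y < 2(n−1), 2x ≤ n·y, and y ≤ x − (n−1). Then q(y−1, x−(n−1)) < 0, where q(a,b) = a² + b² − n·a·b. -/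
theorem stmt_6 (n x y : ℤ) (hn : 4 ≤ n)
    (h1 : 2 * n ≤ x) (h2 : x < n * (n - 1)) (h3 : 4 ≤ y) (h4 : y < 2 * (n - 1))
    (h5 : 2 * x ≤ n * y) (h6 : y ≤ x - (n - 1)) :
    (y - 1) ^ 2 + (x - (n - 1)) ^ 2 - n * (y - 1) * (x - (n - 1)) < 0 := by
  set a := y - 1 with ha
  set b := x - (n - 1) with hb
  have hA : 3 ≤ a := by omega
  have hB : a + 1 ≤ b := by omega
  have hkey : 2 * b ≤ n * a := by
    have : 2 * b = 2 * x - 2 * (n - 1) := by ring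
    nlinarith
  nlinarith [mul_nonneg (by omega : (0:ℤ) ≤ b) (by omega : (0:ℤ) ≤ n * a - 2 * b)]
end

section
/- Let n ≥ 4, and let x, y, x' be integers with 2n ≤ x < n(n−1), 4 ≤ y < 2(n−1), 2x ≤ n·y, y ≤ x−(n−1), and n+1 ≤ x' ≤ 2n−1. Then q(y−2, x−x') < 0, where q(a,b) = a² + b² − n·a·b. -/
theorem stmt_7 (n x y x' : ℤ) (hn : 4 ≤ n)
    (h1 : 2 * n ≤ x) (h2 : x < n * (n - 1)) (h3 : 4 ≤ y) (h4 : y < 2 * (n - 1))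
    (h5 : 2 * x ≤ n * y) (h6 : y ≤ x - (n - 1))
    (h7 : n + 1 ≤ x') (h8 : x' ≤ 2 * n - 1) :
    (y - 2) ^ 2 + (x - x') ^ 2 - n * (y - 2) * (x - x') < 0 := by
  have hb1 : 1 ≤ x - x' := by omega
  have hb2 : 2 * (x - x') ≤ n * (y - 2) - 2 := by nlinarith
  have hb3 : y - n ≤ x - x' := by omega
  have ha : 2 ≤ y - 2 := by omega
  nlinarith [mul_nonneg (sub_nonneg.2 hb1) (by nlinarith : (0:ℤ) ≤ n * (y-2) - 2 - (x - x')),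
    sq_nonneg (y - 2 - (x - x')), sq_nonneg (x - x' - 1), mul_pos (by omega : (0:ℤ) < y - 2) (by omega : (0:ℤ) < x - x')]
end

section
/- Let k be a field, n ≥ 2, and let V be a k-linear subspace of the space of n × y matrices over k (with 2 ≤ y ≤ n) such that every nonzero element of V has rank exactly y. Then dim_k V ≤ n − y + 1. -/
open MvPolynomial

noncomputable def ww (d y : ℕ) : (Fin d ⊕ Fin y) → ℕ × ℕ :=
  Sum.elim (fun _ => (1,0)) (fun _ => (0,1))

lemma weight_eq {d y : ℕ} (μ : (Fin d ⊕ Fin y) →₀ ℕ) :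
    Finsupp.weight (ww d y) μ = (∑ p, μ (Sum.inl p), ∑ q, μ (Sum.inr q)) := by
  rw [Finsupp.weight_apply, Finsupp.sum_fintype _ _ (fun i => by simp)]
  rw [Fintype.sum_sum_type]
  ext
  · simp [ww, Prod.fst_sum]
  · simp [ww, Prod.snd_sum]

lemma comp_mul {k : Type*} [CommRing k] {σ : Type*} (w : σ → ℕ × ℕ)
    (f : MvPolynomial σ k) (hf : f.IsWeightedHomogeneous w (1,1)) (m : ℕ × ℕ)
    (h : MvPolynomial σ k) :
    weightedHomogeneousComponent w (m + (1,1)) (h * f)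
      = weightedHomogeneousComponent w m h * f := by
  induction h using MvPolynomial.induction_on' with
  | monomial u r =>
      have h1 : (monomial u r : MvPolynomial σ k)
          ∈ weightedHomogeneousSubmodule k w (Finsupp.weight w u) :=
        isWeightedHomogeneous_monomial _ _ _ rfl
      have h2 : ((monomial u r : MvPolynomial σ k) * f)
          ∈ weightedHomogeneousSubmodule k w (Finsupp.weight w u + (1,1)) :=
        (isWeightedHomogeneous_monomial _ _ _ rfl).mul hf
      rw [weightedHomogeneousComponent_of_mem h1, weightedHomogeneousComponent_of_mem h2]
      by_cases hm : m = Finsupp.weight w u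
      · simp [hm]
      · rw [if_neg (by simpa using hm), if_neg hm, zero_mul]
  | add p q hp hq => rw [add_mul, map_add, map_add, hp, hq, add_mul]

lemma spanP {k : Type*} [Field k] {n y d N : ℕ} (hy : 1 ≤ y) (hd : 1 ≤ d) (hN1 : 1 ≤ N)
    (f : Fin n → MvPolynomial (Fin d ⊕ Fin y) k)
    (hfhom : ∀ i, (f i).IsWeightedHomogeneous (ww d y) (1,1))
    (hNI : ∀ (p : Fin d) (q : Fin y),
      ((X (Sum.inl p) * X (Sum.inr q) : MvPolynomial (Fin d ⊕ Fin y) k)) ^ N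
        ∈ Ideal.span (Set.range f))
    (E : ℕ) (hE : E = N * (d + y))
    (G : ℕ → Set (MvPolynomial (Fin d ⊕ Fin y) k))
    (hG : G = fun t =>
      { g | ∃ (α : Fin n → ℕ) (μ : (Fin d ⊕ Fin y) →₀ ℕ), (∑ j, α j) = t ∧
          Finsupp.weight (ww d y) μ = (E, E) ∧ g = (∏ j, f j ^ α j) * monomial μ 1 }) :
    ∀ t, weightedHomogeneousSubmodule k (ww d y) (E + t, E + t) ≤
      Submodule.span k (G t) := by
  classical
  -- multiplication by f j raises the span level
  have himg : ∀ t (j : Fin n) (h : MvPolynomial (Fin d ⊕ Fin y) k),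
      h ∈ Submodule.span k (G t) → h * f j ∈ Submodule.span k (G (t+1)) := by
    intro t j h hh
    have h2 : h * f j ∈ Submodule.map (LinearMap.mulRight k (f j)) (Submodule.span k (G t)) :=
      ⟨h, hh, rfl⟩
    rw [Submodule.map_span] at h2
    refine Submodule.span_le.mpr ?_ h2
    rintro g ⟨g', hg', rfl⟩
    rw [hG] at hg'
    obtain ⟨α, μ, hsum, hμ, rfl⟩ := hg'
    apply Submodule.subset_span
    rw [hG]
    refine ⟨fun j' => α j' + (if j' = j then 1 else 0), μ, ?_, hμ, ?_⟩
    · rw [Finset.sum_add_distrib, hsum]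
      simp
    · rw [LinearMap.mulRight_apply]
      have hprod : (∏ j', f j' ^ (α j' + if j' = j then 1 else 0))
          = (∏ j', f j' ^ α j') * f j := by
        rw [Finset.prod_congr rfl (fun j' _ => pow_add (f j') (α j') _),
          Finset.prod_mul_distrib]
        congr 1
        rw [Finset.prod_congr rfl (fun j' _ => pow_ite (j' = j) (f j') 1 0)]
        simp
      rw [hprod]
      ring
  intro t
  induction t with
  | zero =>
      intro u hu
      rw [← support_sum_monomial_coeff u]
      apply Submodule.sum_mem
      intro μ hμs
      have hwμ : Finsupp.weight (ww d y) μ = (E + 0, E + 0) :=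
        hu (mem_support_iff.mp hμs)
      have hsm : (monomial μ (coeff μ u) : MvPolynomial (Fin d ⊕ Fin y) k)
          = (coeff μ u) • monomial μ 1 := by
        rw [smul_monomial, smul_eq_mul, mul_one]
      rw [hsm]
      apply Submodule.smul_mem
      apply Submodule.subset_span
      rw [hG]
      exact ⟨0, μ, by simp, by simpa using hwμ, by simp⟩
  | succ t ih =>
      intro u hu
      rw [← support_sum_monomial_coeff u]
      apply Submodule.sum_mem
      intro μ hμs
      have hwμ : Finsupp.weight (ww d y) μ = (E + (t+1), E + (t+1)) :=
        hu (mem_support_iff.mp hμs)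
      have hsm : (monomial μ (coeff μ u) : MvPolynomial (Fin d ⊕ Fin y) k)
          = (coeff μ u) • monomial μ 1 := by
        rw [smul_monomial, smul_eq_mul, mul_one]
      rw [hsm]
      apply Submodule.smul_mem
      -- now the heart: monomial μ 1 ∈ span (G (t+1))
      have hsx : ∑ p, μ (Sum.inl p) = E + (t+1) ∧ ∑ q, μ (Sum.inr q) = E + (t+1) := by
        have h1 := weight_eq μ
        rw [hwμ] at h1
        exact ⟨(Prod.mk.injEq _ _ _ _ ▸ h1.symm).1, (Prod.mk.injEq _ _ _ _ ▸ h1.symm).2⟩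
      have hdNgen : ∀ m : ℕ, 1 ≤ m → m ≤ d + y → m * (N - 1) < E := by
        intro m hm1 hm2
        have h2 : m * (N - 1) + m = m * ((N - 1) + 1) := by ring
        have h3 : (N - 1) + 1 = N := by omega
        have h4 : m * N ≤ (d + y) * N := Nat.mul_le_mul_right N hm2
        have h5 : (d + y) * N = E := by rw [hE, mul_comm]
        calc m * (N-1) < m * (N-1) + m := by omega
          _ = m * N := by rw [h2, h3]
          _ ≤ (d+y) * N := h4
          _ = E := h5
      have hdN : d * (N - 1) < E ∧ y * (N - 1) < E :=
        ⟨hdNgen d hd (by omega), hdNgen y hy (by omega)⟩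
      obtain ⟨p, hp⟩ : ∃ p, N ≤ μ (Sum.inl p) := by
        by_contra hcon
        push_neg at hcon
        have hle : ∑ p, μ (Sum.inl p) ≤ ∑ _p : Fin d, (N-1) :=
          Finset.sum_le_sum (fun p _ => by have := hcon p; omega)
        rw [Finset.sum_const, Finset.card_univ, Fintype.card_fin, smul_eq_mul] at hle
        omega
      obtain ⟨qq, hqq⟩ : ∃ qq, N ≤ μ (Sum.inr qq) := by
        by_contra hcon
        push_neg at hcon
        have hle : ∑ q, μ (Sum.inr q) ≤ ∑ _q : Fin y, (N-1) :=
          Finset.sum_le_sum (fun q _ => by have := hcon q; omega)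
        rw [Finset.sum_const, Finset.card_univ, Fintype.card_fin, smul_eq_mul] at hle
        omega
      set ν : (Fin d ⊕ Fin y) →₀ ℕ :=
        Finsupp.single (Sum.inl p) N + Finsupp.single (Sum.inr qq) N with hν
      have hνle : ∀ s, ν s ≤ μ s := by
        intro s
        rw [hν, Finsupp.add_apply, Finsupp.single_apply, Finsupp.single_apply]
        rcases s with p' | q'
        · rcases eq_or_ne p p' with h | h
          · subst h; simpa using hp
          · simp [h]
        · rcases eq_or_ne qq q' with h | h
          · subst h; simpa using hqq
          · simp [h]
      set μ' := μ - ν with hμ'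
      have hdecomp : μ = ν + μ' := by
        ext s
        have := hνle s
        simp only [hμ', Finsupp.add_apply, Finsupp.coe_tsub, Pi.sub_apply]
        omega
      have hfact : (monomial μ 1 : MvPolynomial (Fin d ⊕ Fin y) k)
          = (X (Sum.inl p) * X (Sum.inr qq)) ^ N * monomial μ' 1 := by
        rw [mul_pow, X_pow_eq_monomial, X_pow_eq_monomial, monomial_mul, monomial_mul]
        rw [hdecomp]
        simp [hν]
      obtain ⟨g, hg⟩ := (Ideal.mem_span_range_iff_exists_fun).mp (hNI p qq)
      have hkey : (monomial μ 1 : MvPolynomial (Fin d ⊕ Fin y) k)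
          = ∑ j, (g j * monomial μ' 1) * f j := by
        rw [hfact, ← hg, Finset.sum_mul]
        congr 1
        ext j
        ring
      -- apply the weighted homogeneous component at (E+t+1, E+t+1)
      have hcomp := congrArg
        (weightedHomogeneousComponent (ww d y) ((E + t, E + t) + (1,1))) hkey
      rw [IsWeightedHomogeneous.weightedHomogeneousComponent_same
        (isWeightedHomogeneous_monomial _ _ _ (by rw [hwμ]; rfl)), map_sum] at hcomp
      rw [hcomp]
      apply Submodule.sum_mem
      intro j _
      rw [comp_mul (ww d y) (f j) (hfhom j) (E + t, E + t)]
      apply himg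
      apply ih
      exact weightedHomogeneousComponent_mem _ _ _

set_option maxHeartbeats 1000000 in
theorem key {k : Type*} [Field k] [IsAlgClosed k] {n y d : ℕ}
    (hy : 2 ≤ y) (hn : 1 ≤ n) (hd : 2 ≤ d) (hq : n + 2 ≤ d + y)
    (A : Fin d → Matrix (Fin n) (Fin y) k)
    (hA : LinearIndependent k A)
    (hinj : ∀ x : Fin d → k, x ≠ 0 → ∀ z : Fin y → k,
        (∑ p, x p • A p).mulVec z = 0 → z = 0) : False := by
  classical
  set w := ww d y with hw
  set f : Fin n → MvPolynomial (Fin d ⊕ Fin y) k := fun i =>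
    ∑ p, ∑ q, MvPolynomial.C (A p i q) * (X (Sum.inl p) * X (Sum.inr q)) with hf
  have heval : ∀ (v : (Fin d ⊕ Fin y) → k) (i : Fin n),
      eval v (f i) = ((∑ p, v (Sum.inl p) • A p).mulVec (fun q => v (Sum.inr q))) i := by
    intro v i
    rw [hf]
    simp only [map_sum, map_mul, eval_C, eval_X, Matrix.mulVec, dotProduct,
      Matrix.sum_apply, Matrix.smul_apply, smul_eq_mul, Finset.sum_mul]
    rw [Finset.sum_comm]
    congr 1; ext q; congr 1; ext p; ring
  have hfhom : ∀ i, (f i).IsWeightedHomogeneous w ((1,1) : ℕ × ℕ) := by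
    intro i
    rw [hf]
    apply IsWeightedHomogeneous.sum
    intro p _
    apply IsWeightedHomogeneous.sum
    intro q _
    have hx := isWeightedHomogeneous_X (R := k) w (Sum.inl p)
    have hz := isWeightedHomogeneous_X (R := k) w (Sum.inr q)
    have := (isWeightedHomogeneous_C w (A p i q)).mul (hx.mul hz)
    convert this using 2 <;> simp [hw, ww]
  set I : Ideal (MvPolynomial (Fin d ⊕ Fin y) k) := Ideal.span (Set.range f) with hI
  have hrad : ∀ (p : Fin d) (q : Fin y),
      (X (Sum.inl p) * X (Sum.inr q) : MvPolynomial (Fin d ⊕ Fin y) k) ∈ I.radical := by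
    intro p q
    rw [hI, ← vanishingIdeal_zeroLocus_eq_radical (K := k), mem_vanishingIdeal_iff]
    intro v hv
    rw [mem_zeroLocus_iff] at hv
    have hfv : ∀ i, eval v (f i) = 0 := fun i =>
      hv (f i) (Ideal.subset_span (Set.mem_range_self i))
    by_cases hx : (fun p => v (Sum.inl p)) = 0
    · have : v (Sum.inl p) = 0 := congrFun hx p
      simp [this]
    · have hz : (fun q => v (Sum.inr q)) = 0 := by
        apply hinj _ hx
        funext i
        simp only [Pi.zero_apply]
        rw [← heval v i]
        exact hfv i
      have : v (Sum.inr q) = 0 := congrFun hz q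
      simp [this]
  obtain ⟨N, hN1, hNI⟩ : ∃ N : ℕ, 1 ≤ N ∧ ∀ (p : Fin d) (q : Fin y),
      ((X (Sum.inl p) * X (Sum.inr q) : MvPolynomial (Fin d ⊕ Fin y) k)) ^ N ∈ I := by
    have h : ∀ pq : Fin d × Fin y, ∃ m : ℕ,
        ((X (Sum.inl pq.1) * X (Sum.inr pq.2) : MvPolynomial (Fin d ⊕ Fin y) k)) ^ m ∈ I :=
      fun pq => hrad pq.1 pq.2
    choose g hg using h
    refine ⟨1 + Finset.univ.sup g, by omega, fun p q => ?_⟩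
    have hle : g (p, q) ≤ 1 + Finset.univ.sup g :=
      le_trans (Finset.le_sup (Finset.mem_univ _)) (by omega)
    have heq : ((X (Sum.inl p) * X (Sum.inr q) : MvPolynomial (Fin d ⊕ Fin y) k))
          ^ (1 + Finset.univ.sup g)
        = ((X (Sum.inl p) * X (Sum.inr q))) ^ (g (p,q))
          * ((X (Sum.inl p) * X (Sum.inr q))) ^ (1 + Finset.univ.sup g - g (p,q)) := by
      rw [← pow_add]
      congr 1
      omega
    rw [heq]
    exact Ideal.mul_mem_right _ _ (hg (p, q))
  set E := N * (d + y) with hE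
  set G : ℕ → Set (MvPolynomial (Fin d ⊕ Fin y) k) := fun t =>
    { g | ∃ (α : Fin n → ℕ) (μ : (Fin d ⊕ Fin y) →₀ ℕ), (∑ j, α j) = t ∧
        Finsupp.weight w μ = (E, E) ∧ g = (∏ j, f j ^ α j) * monomial μ 1 } with hG
  have hP : ∀ t, weightedHomogeneousSubmodule k w (E + t, E + t) ≤
      Submodule.span k (G t) :=
    spanP (by omega) (by omega) hN1 f hfhom hNI E hE G hG
  -- numbers
  obtain ⟨d', rfl⟩ : ∃ d', d = d' + 1 := ⟨d - 1, by omega⟩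
  obtain ⟨y', rfl⟩ : ∃ y', y = y' + 1 := ⟨y - 1, by omega⟩
  obtain ⟨n', rfl⟩ : ∃ n', n = n' + 1 := ⟨n - 1, by omega⟩
  set q : ℕ := d' + 1 + (y' + 1) with hqdef
  set D : ℕ := (E + 1) ^ q with hD
  set M : ℕ := D * q ^ (n' + 1) + E + 1 with hM
  set e : ℕ := q * M with he
  have hE1 : 1 ≤ E := by
    rw [hE]
    exact Nat.one_le_iff_ne_zero.mpr (Nat.mul_ne_zero (by omega) (by omega))
  have hMe : M ≤ e := by
    rw [he]
    exact Nat.le_mul_of_pos_left M (by omega)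
  have hEe : E + 1 ≤ e := le_trans (by omega) hMe
  set t : ℕ := e - E with ht
  have het : e = E + t := by omega
  -- the linearly independent monomials
  set ψ : ((Fin d' → Fin M) × (Fin y' → Fin M)) → ((Fin (d'+1) ⊕ Fin (y'+1)) →₀ ℕ) :=
    fun ab => Finsupp.equivFunOnFinite.symm (Sum.elim
      (fun p => Fin.lastCases (e - ∑ i, (ab.1 i : ℕ)) (fun i => (ab.1 i : ℕ)) p)
      (fun qq => Fin.lastCases (e - ∑ i, (ab.2 i : ℕ)) (fun i => (ab.2 i : ℕ)) qq)) with hψ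
  have hψapp : ∀ ab s, ψ ab s = (Sum.elim
      (fun p => Fin.lastCases (e - ∑ i, (ab.1 i : ℕ)) (fun i => (ab.1 i : ℕ)) p)
      (fun qq => Fin.lastCases (e - ∑ i, (ab.2 i : ℕ)) (fun i => (ab.2 i : ℕ)) qq)) s := by
    intro ab s
    rw [hψ]
    rfl
  have hψinj : Function.Injective ψ := by
    intro ab ab' hab
    have h1 := Finsupp.equivFunOnFinite.symm.injective hab
    have ha : ab.1 = ab'.1 := by
      funext i
      have h2 := congrFun h1 (Sum.inl (Fin.castSucc i))
      simp only [Sum.elim_inl, Fin.lastCases_castSucc] at h2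
      exact Fin.val_injective h2
    have hb : ab.2 = ab'.2 := by
      funext i
      have h2 := congrFun h1 (Sum.inr (Fin.castSucc i))
      simp only [Sum.elim_inr, Fin.lastCases_castSucc] at h2
      exact Fin.val_injective h2
    exact Prod.ext ha hb
  have hsum_le : ∀ {m : ℕ} (c : Fin m → Fin M), m ≤ q → (∑ i, (c i : ℕ)) ≤ e := by
    intro m c hm
    calc (∑ i, (c i : ℕ)) ≤ ∑ _i : Fin m, M := Finset.sum_le_sum (fun i _ => le_of_lt (c i).isLt)
      _ = m * M := by rw [Finset.sum_const, Finset.card_univ, Fintype.card_fin, smul_eq_mul]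
      _ ≤ q * M := Nat.mul_le_mul_right M hm
      _ = e := he.symm
  have hψw : ∀ ab, Finsupp.weight w (ψ ab) = (e, e) := by
    intro ab
    rw [weight_eq]
    have hxa : (∑ p, ψ ab (Sum.inl p)) = e := by
      rw [Finset.sum_congr rfl (fun p _ => hψapp ab (Sum.inl p))]
      simp only [Sum.elim_inl]
      rw [Fin.sum_univ_castSucc]
      simp only [Fin.lastCases_castSucc, Fin.lastCases_last]
      have := hsum_le ab.1 (by omega)
      omega
    have hxb : (∑ qq, ψ ab (Sum.inr qq)) = e := by
      rw [Finset.sum_congr rfl (fun p _ => hψapp ab (Sum.inr p))]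
      simp only [Sum.elim_inr]
      rw [Fin.sum_univ_castSucc]
      simp only [Fin.lastCases_castSucc, Fin.lastCases_last]
      have := hsum_le ab.2 (by omega)
      omega
    rw [hxa, hxb]
  -- the spanning family
  set gen : ((Fin n' → Fin (t+1)) × ((Fin (d'+1) ⊕ Fin (y'+1)) → Fin (E+1)))
      → MvPolynomial (Fin (d'+1) ⊕ Fin (y'+1)) k := fun cb =>
    ((∏ j : Fin n', f (Fin.castSucc j) ^ (cb.1 j : ℕ))
        * f (Fin.last n') ^ (t - ∑ j, (cb.1 j : ℕ)))
      * monomial (Finsupp.equivFunOnFinite.symm (fun s => (cb.2 s : ℕ))) 1 with hgen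
  have hGsub : G t ⊆ Submodule.span k (Set.range gen) := by
    rintro g ⟨α, μ, hsum, hμw, rfl⟩
    apply Submodule.subset_span
    have hα : ∀ j, α j ≤ t := by
      intro j
      rw [← hsum]
      exact Finset.single_le_sum (f := fun j => α j) (fun _ _ => Nat.zero_le _)
        (Finset.mem_univ j)
    have hμ : ∀ s, μ s ≤ E := by
      intro s
      have h1 := weight_eq μ
      rw [hμw] at h1
      have h2 : (∑ p, μ (Sum.inl p)) = E := (Prod.mk.injEq _ _ _ _ ▸ h1.symm).1
      have h3 : (∑ qq, μ (Sum.inr qq)) = E := (Prod.mk.injEq _ _ _ _ ▸ h1.symm).2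
      rcases s with p | qq
      · rw [← h2]
        exact Finset.single_le_sum (f := fun p => μ (Sum.inl p)) (fun _ _ => Nat.zero_le _)
          (Finset.mem_univ p)
      · rw [← h3]
        exact Finset.single_le_sum (f := fun qq => μ (Sum.inr qq)) (fun _ _ => Nat.zero_le _)
          (Finset.mem_univ qq)
    refine ⟨⟨fun j => ⟨α (Fin.castSucc j), by have := hα (Fin.castSucc j); omega⟩,
      fun s => ⟨μ s, by have := hμ s; omega⟩⟩, ?_⟩
    rw [hgen]
    simp only
    have h4 : (∏ j, f j ^ α j) =
        (∏ j : Fin n', f (Fin.castSucc j) ^ α (Fin.castSucc j)) * f (Fin.last n') ^ α (Fin.last n') := by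
      rw [Fin.prod_univ_castSucc]
    have h5 : t - (∑ j : Fin n', α (Fin.castSucc j)) = α (Fin.last n') := by
      have : (∑ j, α j) = (∑ j : Fin n', α (Fin.castSucc j)) + α (Fin.last n') :=
        Fin.sum_univ_castSucc (f := α)
      omega
    have h6 : Finsupp.equivFunOnFinite.symm (fun s => μ s) = μ := by
      ext s
      rfl
    rw [h4, h5, h6]
  set W := Submodule.span k (Set.range gen) with hW
  have hWfd : FiniteDimensional k W := FiniteDimensional.span_of_finite k (Set.finite_range gen)
  have hmem : ∀ ab, (monomial (ψ ab) (1:k) : MvPolynomial (Fin (d'+1) ⊕ Fin (y'+1)) k) ∈ W := by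
    intro ab
    have h1 : (monomial (ψ ab) (1:k) : MvPolynomial (Fin (d'+1) ⊕ Fin (y'+1)) k)
        ∈ weightedHomogeneousSubmodule k w (E + t, E + t) := by
      apply isWeightedHomogeneous_monomial
      rw [hψw ab, het]
    exact (le_trans (hP t) (Submodule.span_le.mpr hGsub)) h1
  have hli : LinearIndependent k (fun ab => (⟨monomial (ψ ab) (1:k), hmem ab⟩ : W)) := by
    have hmono : LinearIndependent k
        (fun (μ : (Fin (d'+1) ⊕ Fin (y'+1)) →₀ ℕ) => (monomial μ (1:k) : MvPolynomial _ k)) := by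
      have h1 := (MvPolynomial.basisMonomials (Fin (d'+1) ⊕ Fin (y'+1)) k).linearIndependent
      rwa [coe_basisMonomials] at h1
    have hcomp : LinearIndependent k (fun ab => (monomial (ψ ab) (1:k) : MvPolynomial _ k)) :=
      hmono.comp ψ hψinj
    exact LinearIndependent.of_comp W.subtype hcomp
  have hcard := hli.fintype_card_le_finrank
  have hfr : Module.finrank k W ≤ Fintype.card
      ((Fin n' → Fin (t+1)) × ((Fin (d'+1) ⊕ Fin (y'+1)) → Fin (E+1))) :=
    finrank_range_le_card gen
  have hcards : M ^ (d' + y') ≤ (t+1) ^ n' * (E+1) ^ q := by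
    have h1 : Fintype.card ((Fin d' → Fin M) × (Fin y' → Fin M)) = M ^ (d' + y') := by
      simp [Fintype.card_fun, pow_add]
    have h2 : Fintype.card ((Fin n' → Fin (t+1)) × ((Fin (d'+1) ⊕ Fin (y'+1)) → Fin (E+1)))
        = (t+1) ^ n' * (E+1) ^ q := by
      simp [Fintype.card_fun, hqdef]
    rw [← h1, ← h2]
    exact le_trans hcard hfr
  -- final arithmetic contradiction
  have hnq : n' + 1 ≤ d' + y' := by omega
  have hM1 : 1 ≤ M := by omega
  have c1 : M ^ (n' + 1) ≤ M ^ (d' + y') := Nat.pow_le_pow_right hM1 hnq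
  have c2 : (t+1) ^ n' ≤ (q * M) ^ n' := Nat.pow_le_pow_left (by omega) n'
  have c3 : M ^ (n' + 1) ≤ (q * M) ^ n' * D := by
    calc M ^ (n' + 1) ≤ M ^ (d' + y') := c1
      _ ≤ (t+1) ^ n' * (E+1) ^ q := hcards
      _ ≤ (q * M) ^ n' * D := by rw [hD]; exact Nat.mul_le_mul_right _ c2
  have c4 : M ^ n' * M ≤ M ^ n' * (q ^ n' * D) := by
    calc M ^ n' * M = M ^ (n' + 1) := (pow_succ M n').symm
      _ ≤ (q * M) ^ n' * D := c3
      _ = M ^ n' * (q ^ n' * D) := by rw [mul_pow]; ring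
  have c5 : M ≤ q ^ n' * D := Nat.le_of_mul_le_mul_left c4 (Nat.pow_pos hM1)
  have c6 : q ^ n' * D < M := by
    have h7 : q ^ n' ≤ q ^ (n' + 1) := Nat.pow_le_pow_right (by omega) (by omega)
    calc q ^ n' * D ≤ q ^ (n' + 1) * D := Nat.mul_le_mul_right D h7
      _ = D * q ^ (n' + 1) := by ring
      _ < M := by omega
  omega

theorem stmt_9 (k : Type*) [Field k] [IsAlgClosed k] (n y : ℕ)
    (hn : 2 ≤ n) (hy2 : 2 ≤ y) (hyn : y ≤ n)
    (V : Submodule k (Matrix (Fin n) (Fin y) k))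
    (hV : ∀ A ∈ V, A ≠ 0 → A.rank = y) :
    Module.finrank k V ≤ n - y + 1 := by
  by_contra hcon
  push_neg at hcon
  set d := n - y + 2 with hd
  have hdle : d ≤ Module.finrank k V := by omega
  obtain ⟨a, ha⟩ := exists_linearIndependent_of_le_finrank hdle
  set A : Fin d → Matrix (Fin n) (Fin y) k := fun p => (a p : Matrix (Fin n) (Fin y) k) with hA
  have hAli : LinearIndependent k A := ha.map' V.subtype V.ker_subtype
  have hinj : ∀ x : Fin d → k, x ≠ 0 → ∀ z : Fin y → k,
      (∑ p, x p • A p).mulVec z = 0 → z = 0 := by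
    intro x hx z hz
    set B : Matrix (Fin n) (Fin y) k := ∑ p, x p • A p with hB
    have hBV : B ∈ V := by
      rw [hB]
      exact Submodule.sum_mem V (fun p _ => Submodule.smul_mem V _ (a p).2)
    have hBne : B ≠ 0 := by
      intro h0
      apply hx
      have := Fintype.linearIndependent_iff.mp hAli x (by rw [← hB, h0])
      funext p
      exact this p
    have hrank : B.rank = y := hV B hBV hBne
    have hker : LinearMap.ker B.mulVecLin = ⊥ := by
      have h1 := LinearMap.finrank_range_add_finrank_ker B.mulVecLin
      rw [Module.finrank_fintype_fun_eq_card, Fintype.card_fin] at h1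
      have h2 : Module.finrank k (LinearMap.range B.mulVecLin) = y := hrank
      rw [h2] at h1
      have h3 : Module.finrank k (LinearMap.ker B.mulVecLin) = 0 := by omega
      exact Submodule.finrank_eq_zero.mp h3
    have hzker : z ∈ LinearMap.ker B.mulVecLin := by
      rw [LinearMap.mem_ker, Matrix.mulVecLin_apply]
      exact hz
    rw [hker, Submodule.mem_bot] at hzker
    exact hzker
  exact key hy2 (by omega) (by omega) (by omega) A hAli hinj
end

section
/- Let k be an algebraically closed field, n ≥ 3, and x, y positive integers with x + y = n + 1 and y ≤ x. Define the representation X(x,y) of the n-Kronecker quiver by X₁ = k^x, X₂ = k^y, and X(γᵢ)(e_j) = e'_{i−j+1} (interpreted as 0 when i−j+1 ∉ {1,…,y}), where (e_j) and (e'_t) are the standard bases. Then for every nonzero m ∈ X₁, the submodule of X(x,y) generated by m has dimension vector (1, y); equivalently, the n × y matrix with rows γ₁.m, …, γ_n.m has rank y. -/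
theorem stmt_11 (k : Type*) [Field k] [IsAlgClosed k] (n x y : ℕ)
    (hn : 3 ≤ n) (hx : 1 ≤ x) (hy : 1 ≤ y) (hyx : y ≤ x) (hxy : x + y = n + 1)
    (X : Fin n → ((Fin x → k) →ₗ[k] (Fin y → k)))
    (hX : ∀ (i : Fin n) (j : Fin x) (t : Fin y),
      X i (Pi.single j 1) t = if (i : ℤ) - (j : ℤ) = (t : ℤ) then 1 else 0)
    (m : Fin x → k) (hm : m ≠ 0) :
    (Module.finrank k (Submodule.span k (Set.range fun i : Fin n => X i m)) = y)
      ∧ (Matrix.of fun (i : Fin n) (t : Fin y) => X i m t).rank = y := by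
  classical
  -- extend m to ℤ
  set m' : ℤ → k := fun z => ∑ j : Fin x, if (j : ℤ) = z then m j else 0 with hm'def
  have key : ∀ (i : Fin n) (t : Fin y), X i m t = m' ((i : ℤ) - (t : ℤ)) := by
    intro i t
    have hmsum : m = ∑ j : Fin x, m j • (Pi.single j (1 : k) : Fin x → k) := by
      funext u
      simp [Finset.sum_apply, Pi.single_apply]
    rw [hmsum, map_sum, Finset.sum_apply]
    simp only [map_smul, Pi.smul_apply, hX, smul_eq_mul]
    apply Finset.sum_congr rfl
    intro j _
    by_cases h : (i : ℤ) - (j : ℤ) = (t : ℤ)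
    · rw [if_pos h, if_pos (by omega), mul_one]
    · rw [if_neg h, if_neg (by omega), mul_zero]
  -- choose largest index with m j ≠ 0
  have hS : (Finset.univ.filter fun j : Fin x => m j ≠ 0).Nonempty := by
    by_contra h
    apply hm
    funext j
    by_contra hj
    exact h ⟨j, Finset.mem_filter.2 ⟨Finset.mem_univ _, hj⟩⟩
  set j₀ : Fin x := (Finset.univ.filter fun j : Fin x => m j ≠ 0).max' hS with hj₀def
  have hj₀ : m j₀ ≠ 0 := (Finset.mem_filter.1 ((Finset.univ.filter
    fun j : Fin x => m j ≠ 0).max'_mem hS)).2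
  have hmax : ∀ j : Fin x, j₀ < j → m j = 0 := by
    intro j hj
    by_contra hjm
    exact absurd (Finset.le_max' _ j (Finset.mem_filter.2 ⟨Finset.mem_univ _, hjm⟩))
      (not_le.2 hj)
  have hm'j₀ : m' (j₀ : ℤ) = m j₀ := by
    show (∑ j : Fin x, if (j : ℤ) = ((j₀ : ℕ) : ℤ) then m j else 0) = m j₀
    rw [Finset.sum_eq_single j₀]
    · simp
    · intro j _ hj
      rw [if_neg]
      intro h
      exact hj (Fin.ext (by exact_mod_cast h))
    · intro h; exact absurd (Finset.mem_univ j₀) h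
  have hm'big : ∀ z : ℤ, (j₀ : ℤ) < z → m' z = 0 := by
    intro z hz
    show (∑ j : Fin x, if (j : ℤ) = z then m j else 0) = 0
    apply Finset.sum_eq_zero
    intro j _
    by_cases h : (j : ℤ) = z
    · rw [if_pos h, hmax j (by simp only [Fin.lt_def] at *; omega)]
    · rw [if_neg h]
  -- the y selected rows
  have hlt : ∀ t : Fin y, (j₀ : ℕ) + (t : ℕ) < n := by
    intro t
    have := j₀.isLt
    have := t.isLt
    omega
  set r : Fin y → (Fin y → k) := fun t => X ⟨(j₀ : ℕ) + (t : ℕ), hlt t⟩ m with hrdef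
  set B : Matrix (Fin y) (Fin y) k := Matrix.of r with hBdef
  have hBent : ∀ t s : Fin y, B t s = m' ((j₀ : ℤ) + (t : ℤ) - (s : ℤ)) := by
    intro t s
    show X ⟨(j₀ : ℕ) + (t : ℕ), hlt t⟩ m s = _
    have harg : ((⟨(j₀ : ℕ) + (t : ℕ), hlt t⟩ : Fin n) : ℤ) - (s : ℤ)
        = (j₀ : ℤ) + (t : ℤ) - (s : ℤ) := by push_cast; ring
    rw [key, harg]
  have htri : B.BlockTriangular id := by
    intro t s hst
    rw [hBent]
    exact hm'big _ (by simp only [id, Fin.lt_def] at hst; omega)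
  have hdet : B.det ≠ 0 := by
    rw [Matrix.det_of_upperTriangular htri]
    apply Finset.prod_ne_zero_iff.2
    intro t _
    rw [hBent]
    simpa using hm'j₀ ▸ hj₀
  have hli : LinearIndependent k r := by
    have := Matrix.linearIndependent_rows_iff_isUnit.2
      ((Matrix.isUnit_iff_isUnit_det B).2 (isUnit_iff_ne_zero.2 hdet))
    exact this
  haveI : Nonempty (Fin y) := ⟨⟨0, hy⟩⟩
  have hspanr : Submodule.span k (Set.range r) = ⊤ := by
    apply hli.span_eq_top_of_card_eq_finrank
    rw [Module.finrank_fintype_fun_eq_card, Fintype.card_fin]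
  have hspan : Submodule.span k (Set.range fun i : Fin n => X i m) = ⊤ := by
    apply top_unique
    rw [← hspanr]
    apply Submodule.span_mono
    rintro _ ⟨t, rfl⟩
    exact ⟨⟨(j₀ : ℕ) + (t : ℕ), hlt t⟩, rfl⟩
  have hfin : Module.finrank k
      (Submodule.span k (Set.range fun i : Fin n => X i m)) = y := by
    rw [hspan, finrank_top, Module.finrank_fintype_fun_eq_card, Fintype.card_fin]
  refine ⟨hfin, ?_⟩
  rw [Matrix.rank_eq_finrank_span_row]
  exact hfin
end

section
/- Let k be a field, n ≥ 3, and suppose M is a representation of K(n) with dimension vector (x, y), y ≤ x ≤ n − 1, such that every nonzero m ∈ M₁ generates a submodule of dimension vector (1, y). Then x + y ≤ n + 1. -/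
open MvPolynomial

namespace Stmt19Aux

variable {k : Type*} [Field k]

/-- The bigrading weight on `Fin x ⊕ Fin y`. -/
def W (x y : ℕ) : (Fin x ⊕ Fin y) → ℕ × ℕ := Sum.elim (fun _ => (1,0)) (fun _ => (0,1))

lemma weight_W {x y : ℕ} (u : Fin x ⊕ Fin y →₀ ℕ) :
    Finsupp.weight (W x y) u = (∑ i, u (.inl i), ∑ j, u (.inr j)) := by
  rw [Finsupp.weight_apply, Finsupp.sum_fintype _ _ (by intro a; simp)]
  rw [Fintype.sum_sum_type]
  apply Prod.ext <;> simp [W, Prod.fst_sum, Prod.snd_sum]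

lemma wHC_mul_homog {σ : Type*} [DecidableEq σ] {M : Type*} [AddCancelCommMonoid M] [DecidableEq M]
    (w : σ → M) {p : MvPolynomial σ k} {m0 : M} (hp : p.IsWeightedHomogeneous w m0)
    (g : MvPolynomial σ k) (m : M) :
    weightedHomogeneousComponent w (m + m0) (g * p)
      = (weightedHomogeneousComponent w m g) * p := by
  ext d
  rw [coeff_weightedHomogeneousComponent]
  split_ifs with hd
  · rw [coeff_mul, coeff_mul]
    apply Finset.sum_congr rfl
    rintro ⟨d1, d2⟩ hmem
    rw [Finset.HasAntidiagonal.mem_antidiagonal] at hmem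
    rw [coeff_weightedHomogeneousComponent]
    by_cases h2 : coeff d2 p = 0
    · simp [h2]
    · have hw2 : Finsupp.weight w d2 = m0 := hp h2
      have h1 : Finsupp.weight w d1 = m := by
        have h := congrArg (Finsupp.weight w) hmem
        rw [map_add, hw2, hd] at h
        exact add_right_cancel h
      rw [if_pos h1]
  · rw [coeff_mul]
    symm
    apply Finset.sum_eq_zero
    rintro ⟨d1, d2⟩ hmem
    rw [Finset.HasAntidiagonal.mem_antidiagonal] at hmem
    rw [coeff_weightedHomogeneousComponent]
    split_ifs with h1
    · by_cases h2 : coeff d2 p = 0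
      · simp [h2]
      · exact absurd (by rw [← hmem, map_add, h1, hp h2]) hd
    · simp

lemma exists_ge_of_sum_ge {m : ℕ} (f : Fin m → ℕ) (r d : ℕ) (hd : m * (r-1) < d)
    (hs : d ≤ ∑ i, f i) : ∃ i, r ≤ f i := by
  by_contra h
  push_neg at h
  have : ∑ i, f i ≤ m * (r-1) := by
    calc ∑ i, f i ≤ ∑ _i : Fin m, (r-1) := Finset.sum_le_sum (fun i _ => by have := h i; omega)
    _ = m * (r-1) := by simp [Finset.sum_const, mul_comm]
  omega

lemma monomial_mem_ideal {x y : ℕ} (r : ℕ) (I : Ideal (MvPolynomial (Fin x ⊕ Fin y) k))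
    (hr : ∀ i j, ((X (.inl i) * X (.inr j) : MvPolynomial (Fin x ⊕ Fin y) k))^r ∈ I)
    (u : Fin x ⊕ Fin y →₀ ℕ) (d : ℕ) (hu : Finsupp.weight (W x y) u = (d, d))
    (hd : (x + y) * r < d) :
    (monomial u 1 : MvPolynomial (Fin x ⊕ Fin y) k) ∈ I := by
  rw [weight_W] at hu
  have h1 : ∑ i, u (.inl i) = d := congrArg Prod.fst hu
  have h2 : ∑ j, u (.inr j) = d := congrArg Prod.snd hu
  have hx : ∃ i, r ≤ u (.inl i) := by
    refine exists_ge_of_sum_ge _ r d (lt_of_le_of_lt (Nat.mul_le_mul (Nat.le_add_right x y) (Nat.sub_le r 1)) hd) h1.ge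
  have hy : ∃ j, r ≤ u (.inr j) := by
    refine exists_ge_of_sum_ge _ r d (lt_of_le_of_lt (Nat.mul_le_mul (Nat.le_add_left y x) (Nat.sub_le r 1)) hd) h2.ge
  obtain ⟨i, hi⟩ := hx
  obtain ⟨j, hj⟩ := hy
  set s : Fin x ⊕ Fin y →₀ ℕ := Finsupp.single (.inl i) r + Finsupp.single (.inr j) r with hs
  have hle : s ≤ u := by
    intro a
    rcases a with a | a
    · by_cases h : i = a
      · subst h; simpa [hs, Finsupp.single_apply] using hi
      · simp [hs, Finsupp.single_apply, h]
    · by_cases h : j = a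
      · subst h; simpa [hs, Finsupp.single_apply] using hj
      · simp [hs, Finsupp.single_apply, h]
  have hsplit : u = s + (u - s) := by
    ext a
    have := hle a
    simp only [Finsupp.coe_add, Finsupp.coe_tsub, Pi.add_apply, Pi.sub_apply]
    omega
  have heq : (monomial u (1:k)) = ((X (.inl i) * X (.inr j))^r) * monomial (u - s) 1 := by
    rw [mul_pow, X_pow_eq_monomial, X_pow_eq_monomial, monomial_mul, monomial_mul,
      one_mul, one_mul, ← hs, ← hsplit]
  rw [heq]
  exact Ideal.mul_mem_right _ _ (hr i j)

lemma homog_sum_monomials {x y : ℕ} (I : Submodule k (MvPolynomial (Fin x ⊕ Fin y) k))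
    (p : MvPolynomial (Fin x ⊕ Fin y) k) {m : ℕ × ℕ}
    (hp : p.IsWeightedHomogeneous (W x y) m)
    (h : ∀ u : Fin x ⊕ Fin y →₀ ℕ, Finsupp.weight (W x y) u = m →
      (monomial u 1 : MvPolynomial (Fin x ⊕ Fin y) k) ∈ I) : p ∈ I := by
  rw [← support_sum_monomial_coeff p]
  apply Submodule.sum_mem
  intro v hv
  have hw : Finsupp.weight (W x y) v = m := hp (mem_support_iff.mp hv)
  have : (monomial v (coeff v p) : MvPolynomial (Fin x ⊕ Fin y) k)
      = coeff v p • monomial v 1 := by rw [smul_monomial, smul_eq_mul, mul_one]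
  rw [this]
  exact Submodule.smul_mem I (coeff v p) (h v hw)

variable {x y n : ℕ} (P : Fin n → MvPolynomial (Fin x ⊕ Fin y) k) (e0 : ℕ)

/-- span of products of s of the P's times a monomial of weight (e0,e0) -/
noncomputable def Mspan (s : ℕ) : Submodule k (MvPolynomial (Fin x ⊕ Fin y) k) :=
  Submodule.span k {q | ∃ μ : Multiset (Fin n), μ.card = s ∧
    ∃ u : Fin x ⊕ Fin y →₀ ℕ, Finsupp.weight (W x y) u = (e0, e0) ∧
      q = (μ.map P).prod * monomial u 1}

lemma mul_P_mem (a : Fin n) (s : ℕ) (q : MvPolynomial (Fin x ⊕ Fin y) k)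
    (hq : q ∈ Mspan P e0 s) : q * P a ∈ Mspan P e0 (s+1) := by
  induction hq using Submodule.span_induction with
  | mem q hq =>
    obtain ⟨μ, hμ, u, hu, rfl⟩ := hq
    apply Submodule.subset_span
    refine ⟨a ::ₘ μ, by simp [hμ], u, hu, ?_⟩
    rw [Multiset.map_cons, Multiset.prod_cons]; ring
  | zero => simp [Submodule.zero_mem]
  | add q1 q2 _ _ h1 h2 => rw [add_mul]; exact Submodule.add_mem _ h1 h2
  | smul c q _ h => rw [smul_mul_assoc]; exact Submodule.smul_mem _ _ h

lemma span_step (hP : ∀ a, (P a).IsWeightedHomogeneous (W x y) (1,1))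
    (hJmem : ∀ (e : ℕ) (p : MvPolynomial (Fin x ⊕ Fin y) k),
      p.IsWeightedHomogeneous (W x y) (e,e) → e0 < e → p ∈ Ideal.span (Set.range P)) :
    ∀ (s : ℕ) (p : MvPolynomial (Fin x ⊕ Fin y) k),
      p.IsWeightedHomogeneous (W x y) (e0+s, e0+s) → p ∈ Mspan P e0 s := by
  intro s
  induction s with
  | zero =>
    intro p hp
    apply homog_sum_monomials (Mspan P e0 0) p (by simpa using hp)
    intro u hu
    apply Submodule.subset_span
    exact ⟨0, rfl, u, hu, by simp⟩
  | succ s ih =>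
    intro p hp
    have hpJ : p ∈ Ideal.span (Set.range P) := hJmem _ p (by simpa using hp) (by omega)
    rw [Ideal.mem_span_range_iff_exists_fun] at hpJ
    obtain ⟨c, hc⟩ := hpJ
    have hkey : p = ∑ a, (weightedHomogeneousComponent (W x y) (e0+s, e0+s) (c a)) * P a := by
      have h1 : p = weightedHomogeneousComponent (W x y) (e0+s+1, e0+s+1) p :=
        (hp.weightedHomogeneousComponent_same).symm
      conv_lhs => rw [h1, ← hc]
      rw [map_sum]
      apply Finset.sum_congr rfl
      intro a _
      have : ((e0+s+1 : ℕ), (e0+s+1 : ℕ)) = ((e0+s, e0+s) : ℕ × ℕ) + (1,1) := by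
        simp [Prod.ext_iff]
      rw [this, wHC_mul_homog (W x y) (hP a) (c a) (e0+s, e0+s)]
    rw [hkey]
    apply Submodule.sum_mem
    intro a _
    exact mul_P_mem P e0 a s _ (ih _ (weightedHomogeneousComponent_isWeightedHomogeneous _ _))

lemma card_compare {V : Type*} [AddCommGroup V] [Module k V] {ι κ : Type*} [Fintype ι] [Fintype κ]
    (v : ι → V) (u : κ → V) (hli : LinearIndependent k v)
    (hv : ∀ i, v i ∈ Submodule.span k (Set.range u)) :
    Fintype.card ι ≤ Fintype.card κ := by
  classical
  set N := Submodule.span k (Set.range u) with hN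
  haveI : FiniteDimensional k N := FiniteDimensional.span_of_finite k (Set.finite_range u)
  have hli' : LinearIndependent k (fun i => (⟨v i, hv i⟩ : N)) := by
    apply LinearIndependent.of_comp N.subtype
    exact hli
  have h1 : Fintype.card ι ≤ Module.finrank k N := hli'.fintype_card_le_finrank
  have h2 : Module.finrank k N ≤ Fintype.card κ := by
    calc Module.finrank k N ≤ (Set.range u).toFinset.card := finrank_span_le_card _
    _ = Fintype.card (Set.range u) := Set.toFinset_card _
    _ ≤ Fintype.card κ := Fintype.card_range_le u
  omega

def Dset (x y e : ℕ) : Type := {u : Fin x ⊕ Fin y →₀ ℕ // Finsupp.weight (W x y) u = (e,e)}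

instance (x y e : ℕ) : Finite (Dset x y e) := by
  apply Finite.of_injective (fun (u : Dset x y e) (s : Fin x ⊕ Fin y) => (⟨u.1 s, by
    rcases s with i | j
    · have h1 : (∑ i, u.1 (.inl i)) = e := by
        have := weight_W u.1; rw [u.2] at this
        exact (congrArg Prod.fst this).symm
      have : u.1 (.inl i) ≤ e :=
        le_trans (Finset.single_le_sum (f := fun i => u.1 (.inl i))
          (fun _ _ => Nat.zero_le _) (Finset.mem_univ i)) h1.le
      omega
    · have h1 : (∑ j, u.1 (.inr j)) = e := by
        have := weight_W u.1; rw [u.2] at this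
        exact (congrArg Prod.snd this).symm
      have : u.1 (.inr j) ≤ e :=
        le_trans (Finset.single_le_sum (f := fun j => u.1 (.inr j))
          (fun _ _ => Nat.zero_le _) (Finset.mem_univ j)) h1.le
      omega⟩ : Fin (e+1)))
  intro u1 u2 h
  apply Subtype.ext; ext s
  have := congrFun h s
  simpa using congrArg Fin.val this

/-- the lower-bound exponent family -/
noncomputable def uab {x' y' Q : ℕ} (d : ℕ) (a : Fin x' → Fin Q) (b : Fin y' → Fin Q) :
    (Fin (x'+1) ⊕ Fin (y'+1)) →₀ ℕ :=
  Finsupp.equivFunOnFinite.symm (Sum.elim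
    (Fin.cons (d - ∑ i, (a i : ℕ)) (fun i => (a i : ℕ)))
    (Fin.cons (d - ∑ j, (b j : ℕ)) (fun j => (b j : ℕ))))

lemma uab_weight {x' y' Q : ℕ} (d : ℕ) (a : Fin x' → Fin Q) (b : Fin y' → Fin Q)
    (hdx : x' * (Q-1) ≤ d) (hdy : y' * (Q-1) ≤ d) (hQ : 1 ≤ Q) :
    Finsupp.weight (W (x'+1) (y'+1)) (uab d a b) = (d, d) := by
  rw [weight_W]
  have hsx : ∑ i, (a i : ℕ) ≤ d := by
    calc ∑ i, (a i : ℕ) ≤ ∑ _i : Fin x', (Q-1) :=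
      Finset.sum_le_sum (fun i _ => by have := (a i).isLt; omega)
    _ = x' * (Q-1) := by simp [Finset.sum_const, mul_comm]
    _ ≤ d := hdx
  have hsy : ∑ j, (b j : ℕ) ≤ d := by
    calc ∑ j, (b j : ℕ) ≤ ∑ _j : Fin y', (Q-1) :=
      Finset.sum_le_sum (fun j _ => by have := (b j).isLt; omega)
    _ = y' * (Q-1) := by simp [Finset.sum_const, mul_comm]
    _ ≤ d := hdy
  have h1 : ∑ i, (uab d a b) (.inl i) = d := by
    simp only [uab, Finsupp.coe_equivFunOnFinite_symm, Sum.elim_inl]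
    rw [Fin.sum_cons]
    omega
  have h2 : ∑ j, (uab d a b) (.inr j) = d := by
    simp only [uab, Finsupp.coe_equivFunOnFinite_symm, Sum.elim_inr]
    rw [Fin.sum_cons]
    omega
  rw [h1, h2]

lemma uab_injective {x' y' Q : ℕ} (d : ℕ) :
    Function.Injective (fun ab : (Fin x' → Fin Q) × (Fin y' → Fin Q) => uab d ab.1 ab.2) := by
  rintro ⟨a, b⟩ ⟨a', b'⟩ h
  simp only [Prod.mk.injEq]
  constructor
  · funext i
    have := congrFun (congrArg (fun (u : (Fin (x'+1) ⊕ Fin (y'+1)) →₀ ℕ) => (u : _ → ℕ)) h)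
      (.inl i.succ)
    apply Fin.val_injective
    simpa [uab, Fin.cons_succ] using this
  · funext j
    have := congrFun (congrArg (fun (u : (Fin (x'+1) ⊕ Fin (y'+1)) →₀ ℕ) => (u : _ → ℕ)) h)
      (.inr j.succ)
    apply Fin.val_injective
    simpa [uab, Fin.cons_succ] using this

end Stmt19Aux
namespace Stmt19Aux
variable {k : Type*} [Field k]

lemma core {x' y' n : ℕ} (hn : 1 ≤ n)
    (hsum : n + 2 ≤ (x'+1) + (y'+1))
    (P : Fin n → MvPolynomial (Fin (x'+1) ⊕ Fin (y'+1)) k)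
    (hP : ∀ a, (P a).IsWeightedHomogeneous (W (x'+1) (y'+1)) (1,1))
    (r : ℕ) (hr1 : 1 ≤ r)
    (hr : ∀ i j, ((X (.inl i) * X (.inr j) : MvPolynomial (Fin (x'+1) ⊕ Fin (y'+1)) k))^r
      ∈ Ideal.span (Set.range P)) :
    False := by
  classical
  set e0 := ((x'+1)+(y'+1))*r with he0
  have hJmem : ∀ (e : ℕ) (p : MvPolynomial (Fin (x'+1) ⊕ Fin (y'+1)) k),
      p.IsWeightedHomogeneous (W (x'+1) (y'+1)) (e,e) → e0 < e → p ∈ Ideal.span (Set.range P) := by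
    intro e p hp he
    have : p ∈ Submodule.restrictScalars k (Ideal.span (Set.range P)) := by
      apply homog_sum_monomials _ p hp
      intro u hu
      simp only [Submodule.restrictScalars_mem]
      exact monomial_mem_ideal r _ hr u e hu (by omega)
    simpa using this
  haveI : Fintype (Dset (x'+1) (y'+1) e0) := Fintype.ofFinite _
  set K0 := Fintype.card (Dset (x'+1) (y'+1) e0) with hK0
  set Q := (n+(x'+1)+(y'+1))^(n-1) * K0 + r + 2 with hQ
  have hQ1 : 1 ≤ Q := by omega
  set d := ((x'+1)+(y'+1)) * Q with hd
  have hrQ : r ≤ Q := by omega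
  have he0d : e0 ≤ d := by
    rw [he0, hd]; exact Nat.mul_le_mul_left _ hrQ
  set s := d - e0 with hs
  -- the spanning family
  set fam : Sym (Fin n) s × Dset (x'+1) (y'+1) e0 → MvPolynomial (Fin (x'+1) ⊕ Fin (y'+1)) k :=
    fun z => ((z.1 : Multiset (Fin n)).map P).prod * monomial z.2.1 1 with hfam
  have hMle : Mspan P e0 s ≤ Submodule.span k (Set.range fam) := by
    apply Submodule.span_le.mpr
    rintro q ⟨μ, hμ, u, hu, rfl⟩
    apply Submodule.subset_span
    exact ⟨(⟨μ, hμ⟩, ⟨u, hu⟩), rfl⟩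
  -- the independent family
  set ind : ((Fin x' → Fin Q) × (Fin y' → Fin Q)) → MvPolynomial (Fin (x'+1) ⊕ Fin (y'+1)) k :=
    fun ab => monomial (uab d ab.1 ab.2) 1 with hind
  have hdx : x' * (Q-1) ≤ d := by
    rw [hd]; exact Nat.mul_le_mul (by omega) (by omega)
  have hdy : y' * (Q-1) ≤ d := by
    rw [hd]; exact Nat.mul_le_mul (by omega) (by omega)
  have hindmem : ∀ ab, ind ab ∈ Submodule.span k (Set.range fam) := by
    intro ab
    apply hMle
    have hw : Finsupp.weight (W (x'+1) (y'+1)) (uab d ab.1 ab.2) = (e0+s, e0+s) := by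
      rw [uab_weight d ab.1 ab.2 hdx hdy hQ1]
      have : e0 + s = d := by omega
      rw [this]
    exact span_step P e0 hP hJmem s _ (isWeightedHomogeneous_monomial _ _ _ hw)
  have hli : LinearIndependent k ind := by
    have : ind = ⇑(basisMonomials (Fin (x'+1) ⊕ Fin (y'+1)) k) ∘
        (fun ab : (Fin x' → Fin Q) × (Fin y' → Fin Q) => uab d ab.1 ab.2) := by
      funext ab
      simp [hind, coe_basisMonomials]
    rw [this]
    exact (basisMonomials (Fin (x'+1) ⊕ Fin (y'+1)) k).linearIndependent.comp _ (uab_injective d)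
  have hcard := card_compare ind fam hli hindmem
  -- compute cardinalities
  have hcardι : Fintype.card ((Fin x' → Fin Q) × (Fin y' → Fin Q)) = Q^(x'+y') := by
    simp [Fintype.card_fun, pow_add]
  have hcardκ : Fintype.card (Sym (Fin n) s × Dset (x'+1) (y'+1) e0) = (n + s - 1).choose s * K0 := by
    rw [Fintype.card_prod, Sym.card_sym_eq_choose]
    simp
    left; rw [hK0]
  rw [hcardι, hcardκ] at hcard
  -- arithmetic contradiction
  have hch : (n + s - 1).choose s ≤ (n + d)^(n-1) := by
    have h1 : s ≤ n + s - 1 := by omega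
    have h2 : (n + s - 1).choose s = (n + s - 1).choose (n-1) := by
      rw [← Nat.choose_symm h1]
      congr 1
      omega
    rw [h2]
    calc (n + s - 1).choose (n-1) ≤ (n + s - 1)^(n-1) := Nat.choose_le_pow _ _
    _ ≤ (n + d)^(n-1) := Nat.pow_le_pow_left (by omega) _
  have hnd : n + d ≤ (n + (x'+1) + (y'+1)) * Q := by
    rw [hd]
    calc n + ((x'+1)+(y'+1)) * Q ≤ n * Q + ((x'+1)+(y'+1)) * Q := by
          have : n ≤ n * Q := Nat.le_mul_of_pos_right n (by omega)
          omega
    _ = (n + (x'+1) + (y'+1)) * Q := by ring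
  have hmain : Q^n ≤ (n+(x'+1)+(y'+1))^(n-1) * K0 * Q^(n-1) := by
    calc Q^n ≤ Q^(x'+y') := Nat.pow_le_pow_right hQ1 (by omega)
    _ ≤ (n + s - 1).choose s * K0 := hcard
    _ ≤ (n + d)^(n-1) * K0 := Nat.mul_le_mul_right _ hch
    _ ≤ ((n+(x'+1)+(y'+1)) * Q)^(n-1) * K0 := Nat.mul_le_mul_right _ (Nat.pow_le_pow_left hnd _)
    _ = (n+(x'+1)+(y'+1))^(n-1) * K0 * Q^(n-1) := by rw [mul_pow]; ring
  have hQn : Q^n = Q * Q^(n-1) := by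
    conv_lhs => rw [show n = (n-1)+1 by omega]
    rw [pow_succ]
    ring
  rw [hQn] at hmain
  have hQle : Q ≤ (n+(x'+1)+(y'+1))^(n-1) * K0 :=
    Nat.le_of_mul_le_mul_right (by
      calc Q * Q^(n-1) ≤ (n+(x'+1)+(y'+1))^(n-1) * K0 * Q^(n-1) := hmain
      _ = ((n+(x'+1)+(y'+1))^(n-1) * K0) * Q^(n-1) := by ring) (Nat.pow_pos (by omega))
  omega

end Stmt19Aux
namespace Stmt19Aux
variable {k : Type*} [Field k]

lemma no_nonsingular [IsAlgClosed k] {n x' y' : ℕ} (hn : 1 ≤ n)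
    (hsum : n + 2 ≤ (x'+1)+(y'+1))
    (lam : Fin n → Fin (x'+1) → Fin (y'+1) → k)
    (hns : ∀ (m : Fin (x'+1) → k) (c : Fin (y'+1) → k),
      (∀ a, ∑ i, ∑ j, lam a i j * m i * c j = 0) → m = 0 ∨ c = 0) : False := by
  classical
  set P : Fin n → MvPolynomial (Fin (x'+1) ⊕ Fin (y'+1)) k :=
    fun a => ∑ i, ∑ j, C (lam a i j) * X (.inl i) * X (.inr j) with hPdef
  have hP : ∀ a, (P a).IsWeightedHomogeneous (W (x'+1) (y'+1)) (1,1) := by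
    intro a
    apply IsWeightedHomogeneous.sum
    intro i _
    apply IsWeightedHomogeneous.sum
    intro j _
    have h1 := ((isWeightedHomogeneous_C (W (x'+1) (y'+1)) (lam a i j)).mul
        (isWeightedHomogeneous_X k (W (x'+1) (y'+1)) (.inl i))).mul
          (isWeightedHomogeneous_X k (W (x'+1) (y'+1)) (.inr j))
    have heq : ((0:ℕ×ℕ) + W (x'+1) (y'+1) (.inl i)) + W (x'+1) (y'+1) (.inr j)
        = ((1,1) : ℕ × ℕ) := by
      simp [W, Prod.ext_iff]
    rw [heq] at h1
    exact h1
  have key : ∀ (i : Fin (x'+1)) (j : Fin (y'+1)), ∃ r0 : ℕ,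
      ((X (.inl i) * X (.inr j) : MvPolynomial (Fin (x'+1) ⊕ Fin (y'+1)) k))^r0
        ∈ Ideal.span (Set.range P) := by
    intro i j
    rw [← Ideal.mem_radical_iff, ← vanishingIdeal_zeroLocus_eq_radical (K := k),
      mem_vanishingIdeal_iff]
    intro z hz
    have hz' : ∀ a, ∑ i', ∑ j', lam a i' j' * z (.inl i') * z (.inr j') = 0 := by
      intro a
      have := hz (P a) (Ideal.subset_span (Set.mem_range_self a))
      simpa [hPdef, eval_sum, eval_mul, eval_C, eval_X] using this
    rcases hns (fun i' => z (.inl i')) (fun j' => z (.inr j')) hz' with h | h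
    · have : z (.inl i) = 0 := congrFun h i
      simp [this]
    · have : z (.inr j) = 0 := congrFun h j
      simp [this]
  set F : Fin (x'+1) × Fin (y'+1) → ℕ := fun p => Classical.choose (key p.1 p.2) with hF
  set r := (Finset.univ.sup F) + 1 with hrdef
  have hr : ∀ i j, ((X (.inl i) * X (.inr j) : MvPolynomial (Fin (x'+1) ⊕ Fin (y'+1)) k))^r
      ∈ Ideal.span (Set.range P) := by
    intro i j
    have hFij : F (i, j) ≤ r := by
      have := Finset.le_sup (f := F) (Finset.mem_univ (i, j))
      omega
    have hmem := Classical.choose_spec (key i j)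
    have : ((X (.inl i) * X (.inr j) : MvPolynomial (Fin (x'+1) ⊕ Fin (y'+1)) k))^r
        = (X (.inl i) * X (.inr j))^(r - F (i,j)) * (X (.inl i) * X (.inr j))^(F (i,j)) := by
      rw [← pow_add]
      congr 1
      omega
    rw [this]
    exact Ideal.mul_mem_left _ _ hmem
  exact core hn hsum P hP r (by omega) hr

end Stmt19Aux

theorem stmt_19 (k : Type*) [Field k] [IsAlgClosed k] (n x y : ℕ)
    (hn : 3 ≤ n) (hy : 1 ≤ y) (hyx : y ≤ x) (hxn : x ≤ n - 1)
    (f : Fin n → ((Fin x → k) →ₗ[k] (Fin y → k)))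
    (hgen : ∀ m : Fin x → k, m ≠ 0 →
      Module.finrank k (Submodule.span k (Set.range fun i : Fin n => f i m)) = y) :
    x + y ≤ n + 1 := by
  by_contra hcon
  push_neg at hcon
  obtain ⟨x', rfl⟩ : ∃ x', x = x'+1 := ⟨x-1, by omega⟩
  obtain ⟨y', rfl⟩ : ∃ y', y = y'+1 := ⟨y-1, by omega⟩
  classical
  set lam : Fin n → Fin (x'+1) → Fin (y'+1) → k := fun a i j => f a (Pi.single i 1) j with hlam
  apply Stmt19Aux.no_nonsingular (n := n) (x' := x') (y' := y') (by omega) (by omega) lam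
  intro m c h
  by_contra hmc
  push_neg at hmc
  obtain ⟨hm, hc⟩ := hmc
  have htop : Submodule.span k (Set.range fun i : Fin n => f i m) = ⊤ := by
    apply Submodule.eq_top_of_finrank_eq
    rw [hgen m hm, Module.finrank_pi]
    simp
  set φ : (Fin (y'+1) → k) →ₗ[k] k :=
    ∑ j, c j • (LinearMap.proj j : (Fin (y'+1) → k) →ₗ[k] k) with hφ
  have hφ_apply : ∀ v : Fin (y'+1) → k, φ v = ∑ j, c j * v j := by
    intro v
    rw [hφ]
    simp [LinearMap.sum_apply, LinearMap.smul_apply, LinearMap.proj_apply, smul_eq_mul]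
  have hfam : ∀ a, f a m = ∑ i, m i • f a (Pi.single i 1) := by
    intro a
    have hm' : m = ∑ i, Pi.single i (m i) := (Finset.univ_sum_single m).symm
    conv_lhs => rw [hm']
    rw [map_sum]
    apply Finset.sum_congr rfl
    intro i _
    have : Pi.single i (m i) = m i • (Pi.single i (1:k) : Fin (x'+1) → k) := by
      funext j'
      by_cases hij : i = j' <;> simp [Pi.single_apply, hij]
    rw [this, map_smul]
  have hker : ∀ a, φ (f a m) = 0 := by
    intro a
    rw [hφ_apply]
    have hco : ∀ j, (f a m) j = ∑ i, m i * lam a i j := by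
      intro j
      rw [hfam a]
      simp [Finset.sum_apply, hlam, smul_eq_mul]
    calc ∑ j, c j * (f a m) j = ∑ j, ∑ i, lam a i j * m i * c j := by
          apply Finset.sum_congr rfl
          intro j _
          rw [hco j, Finset.mul_sum]
          apply Finset.sum_congr rfl
          intro i _
          ring
    _ = ∑ i, ∑ j, lam a i j * m i * c j := Finset.sum_comm
    _ = 0 := h a
  have hczero : ∀ j, c j = 0 := by
    intro j
    have hmem : ∀ v : Fin (y'+1) → k, φ v = 0 := by
      intro v
      have : v ∈ Submodule.span k (Set.range fun i : Fin n => f i m) := by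
        rw [htop]; trivial
      have hle : Submodule.span k (Set.range fun i : Fin n => f i m) ≤ LinearMap.ker φ := by
        apply Submodule.span_le.mpr
        rintro _ ⟨a, rfl⟩
        exact hker a
      exact hle this
    have := hmem (Pi.single j 1)
    rw [hφ_apply] at this
    simpa [Pi.single_apply] using this
  exact hc (funext hczero)
end
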